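/- Let L ∈ ℝ^{N×N} be the Laplacian matrix of a strongly connected weighted directed graph, let μ ∈ ℝ^N satisfy μ_i > 0 for all i and μ^⊤ L = 0, and let M = diag(μ_1,…,μ_N). Then the symmetric matrix L^⊤ M + M L is positive semidefinite, i.e., x^⊤ (L^⊤ M + M L) x ≥ 0 for all x ∈ ℝ^N. -/

import Mathlib

open Finset Matrix

/-- In the weighted directed graph with weights `a` (an edge from node `j` to
node `i` whenever `a i j > 0`), node `j` is reachable from node `i`. -/
def Reachable {N : ℕ} (a : Fin N → Fin N → ℝ) : Fin N → Fin N → Prop :=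
  Relation.ReflTransGen (fun u v => 0 < a v u)

/-- The Laplacian matrix of the weighted directed graph with weights `a`:
`[L]ᵢⱼ = −aᵢⱼ` for `i ≠ j` and `[L]ᵢᵢ = ∑_{ℓ≠i} aᵢℓ`. -/
def lap {N : ℕ} (a : Fin N → Fin N → ℝ) : Matrix (Fin N) (Fin N) ℝ :=
  Matrix.of fun i j =>
    if i = j then ∑ ℓ ∈ Finset.univ.erase i, a i ℓ else -(a i j)

/-!
Write `M = diagonal μ`. Expanding `∑ᵢₖ μᵢ Lᵢₖ (xₖ - xᵢ)²`, the terms in `xₖ²` vanish because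
`μᵀ L = 0` and those in `xᵢ²` because `L 1 = 0`, so `xᵀ (Lᵀ M + M L) x` is minus this sum.
Its diagonal terms are zero and its off-diagonal ones are `≤ 0` since `Lᵢₖ ≤ 0` and `μᵢ ≥ 0`.
-/

section QuadraticForm

variable {ι : Type*} [Fintype ι] [DecidableEq ι]

theorem dotProduct_transpose_mul_diagonal_add_mulVec_self (L : Matrix ι ι ℝ) (μ x : ι → ℝ) :
    x ⬝ᵥ ((Lᵀ * diagonal μ + diagonal μ * L) *ᵥ x) = 2 * ∑ i, ∑ k, μ i * L i k * x i * x k := by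
  rw [add_mulVec, dotProduct_add, ← mulVec_mulVec, ← mulVec_mulVec, dotProduct_mulVec,
    vecMul_transpose]
  simp only [dotProduct, mulVec_diagonal]
  simp only [mulVec, dotProduct, sum_mul, mul_sum, ← sum_add_distrib]
  exact sum_congr rfl fun i _ => sum_congr rfl fun k _ => by ring

theorem dotProduct_transpose_mul_diagonal_add_mulVec_self_eq_neg_sum_sq (L : Matrix ι ι ℝ)
    (μ : ι → ℝ) (hrow : L *ᵥ 1 = 0) (hcol : μ ᵥ* L = 0) (x : ι → ℝ) :
    x ⬝ᵥ ((Lᵀ * diagonal μ + diagonal μ * L) *ᵥ x) = -∑ i, ∑ k, μ i * L i k * (x k - x i) ^ 2 := by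
  have hsq_right : ∑ i, ∑ k, μ i * L i k * x k ^ 2 = 0 := by
    rw [sum_comm]
    refine sum_eq_zero fun k _ => ?_
    have hk : ∑ i, μ i * L i k = 0 := congrFun hcol k
    rw [← sum_mul, hk, zero_mul]
  have hsq_left : ∑ i, ∑ k, μ i * L i k * x i ^ 2 = 0 := by
    refine sum_eq_zero fun i _ => ?_
    have hi : ∑ k, L i k = 0 := by
      simpa only [mulVec, dotProduct, Pi.one_apply, mul_one, Pi.zero_apply] using congrFun hrow i
    simp_rw [mul_comm (μ i), mul_assoc, ← sum_mul, hi, zero_mul]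
  have hexpand : ∑ i, ∑ k, μ i * L i k * (x k - x i) ^ 2
      = ∑ i, ∑ k, μ i * L i k * x k ^ 2 - 2 * ∑ i, ∑ k, μ i * L i k * x i * x k
        + ∑ i, ∑ k, μ i * L i k * x i ^ 2 := by
    simp only [mul_sum, ← sum_sub_distrib, ← sum_add_distrib]
    exact sum_congr rfl fun i _ => sum_congr rfl fun k _ => by ring
  rw [dotProduct_transpose_mul_diagonal_add_mulVec_self, hexpand, hsq_right, hsq_left]
  ring

theorem dotProduct_transpose_mul_diagonal_add_mulVec_self_nonneg (L : Matrix ι ι ℝ)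
    (hoff : ∀ i k, i ≠ k → L i k ≤ 0) (μ : ι → ℝ) (hμ : ∀ i, 0 ≤ μ i)
    (hrow : L *ᵥ 1 = 0) (hcol : μ ᵥ* L = 0) (x : ι → ℝ) :
    0 ≤ x ⬝ᵥ ((Lᵀ * diagonal μ + diagonal μ * L) *ᵥ x) := by
  rw [dotProduct_transpose_mul_diagonal_add_mulVec_self_eq_neg_sum_sq L μ hrow hcol,
    neg_nonneg]
  refine sum_nonpos fun i _ => sum_nonpos fun k _ => ?_
  obtain rfl | hik := eq_or_ne i k
  · simp
  · exact mul_nonpos_of_nonpos_of_nonneg (mul_nonpos_of_nonneg_of_nonpos (hμ i) (hoff i k hik))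
      (sq_nonneg _)

end QuadraticForm

section Laplacian

variable {N : ℕ} (a : Fin N → Fin N → ℝ)

theorem lap_apply_of_ne {i j : Fin N} (h : i ≠ j) : lap a i j = -a i j := by
  simp [lap, h]

theorem lap_mulVec_one : lap a *ᵥ 1 = 0 := by
  funext i
  simp only [mulVec, dotProduct, Pi.one_apply, mul_one, Pi.zero_apply]
  rw [← sum_erase_add _ _ (mem_univ i),
    sum_congr rfl fun j hj => lap_apply_of_ne a (ne_of_mem_erase hj).symm]
  simp [lap]

end Laplacian

theorem laplacian_transpose_mul_diag_add_posSemidef_general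
    (N : ℕ)
    (a : Fin N → Fin N → ℝ)
    (ha : ∀ i j : Fin N, i ≠ j → 0 ≤ a i j)
    (μ : Fin N → ℝ) (hμ : ∀ i, 0 < μ i)
    (hμL : ∀ j : Fin N, ∑ i, μ i * lap a i j = 0) :
    ∀ x : Fin N → ℝ,
      0 ≤ x ⬝ᵥ ((lap a)ᵀ * Matrix.diagonal μ + Matrix.diagonal μ * lap a).mulVec x :=
  dotProduct_transpose_mul_diagonal_add_mulVec_self_nonneg (lap a)
    (fun i k hik => by rw [lap_apply_of_ne a hik]; exact neg_nonpos.mpr (ha i k hik))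
    μ (fun i => (hμ i).le) (lap_mulVec_one a) (funext hμL)

/-- If `L` is the Laplacian of a strongly connected weighted directed graph,
`μ` is a positive left null vector of `L`, and `M = diag(μ)`, then
`Lᵀ M + M L` is positive semidefinite. -/
theorem laplacian_transpose_mul_diag_add_posSemidef
    (N : ℕ) (hN : 0 < N)
    (a : Fin N → Fin N → ℝ)
    (ha : ∀ i j : Fin N, i ≠ j → 0 ≤ a i j)
    (hsc : ∀ i j : Fin N, Reachable a i j)
    (μ : Fin N → ℝ) (hμ : ∀ i, 0 < μ i)
    (hμL : ∀ j : Fin N, ∑ i, μ i * lap a i j = 0) :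
    ∀ x : Fin N → ℝ,
      0 ≤ x ⬝ᵥ ((lap a)ᵀ * Matrix.diagonal μ + Matrix.diagonal μ * lap a).mulVec x :=
  laplacian_transpose_mul_diag_add_posSemidef_general N a ha μ hμ hμL
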